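/- arXiv:2305.02861 — 2 statements merged into one kernel-verified Lean document; each statement's English description precedes it below -/
import Mathlib

section
/- Let 0 < s < 1. There exists a constant c_s > 0, depending only on s, such that for all t > 0, m ∈ ℝ³ and η ∈ ℝ³, c_s · t·(|η|² + t²|m|²)^s ≤ ∫₀ᵗ |η + ρ m|^{2s} dρ ≤ (1/c_s) · t·(|η|² + t²|m|²)^s. -/
/-!
Expanding around the minimiser `ρ₀ = -⟪η, m⟫ / ‖m‖²` of `ρ ↦ ‖η + ρ • m‖`, one has
`‖η + ρ • m‖² = ‖η + ρ₀ • m‖² + (ρ - ρ₀)² ‖m‖²`. On a quarter of `[0, t]` far from `ρ₀`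
this dominates `(‖η‖² + t² ‖m‖²) / 80`, while on all of `[0, t]` the triangle inequality bounds
it by `2 (‖η‖² + t² ‖m‖²)`. Raising to the power `s` and integrating gives both bounds.
-/

open Set

lemma Real.rpow_two_mul {x : ℝ} (hx : 0 ≤ x) (s : ℝ) : x ^ (2 * s) = (x ^ 2) ^ s := by
  rw [Real.rpow_mul hx, Real.rpow_two]

lemma exists_Icc_forall_sq_add_sq_le_sq_sub {t : ℝ} (ht : 0 ≤ t) (ρ₀ : ℝ) :
    ∃ a, 0 ≤ a ∧ a + t / 4 ≤ t ∧
      ∀ ρ ∈ Icc a (a + t / 4), ρ₀ ^ 2 + t ^ 2 ≤ 80 * (ρ - ρ₀) ^ 2 := by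
  rcases le_or_gt ρ₀ (t / 2) with h | h
  · refine ⟨3 * t / 4, by linarith, by linarith, fun ρ ⟨h₁, h₂⟩ => ?_⟩
    nlinarith [sq_nonneg (4 * (ρ - ρ₀) - t), sq_nonneg ρ₀]
  · refine ⟨0, le_rfl, by linarith, fun ρ ⟨h₁, h₂⟩ => ?_⟩
    nlinarith [sq_nonneg (2 * (ρ₀ - ρ) - ρ₀), sq_nonneg (ρ₀ - ρ)]

section InnerProductSpace

variable {E : Type*} [NormedAddCommGroup E] [InnerProductSpace ℝ E]

lemma norm_add_smul_sq_eq (η m : E) (ρ : ℝ) :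
    ‖η + ρ • m‖ ^ 2 = ‖η + (-inner ℝ η m / ‖m‖ ^ 2) • m‖ ^ 2
      + (ρ - (-inner ℝ η m / ‖m‖ ^ 2)) ^ 2 * ‖m‖ ^ 2 := by
  set ρ₀ := -inner ℝ η m / ‖m‖ ^ 2
  -- `ρ₀ ‖m‖² = -⟪η, m⟫` also holds for `m = 0`, where `ρ₀ = 0` by the division convention.
  have hρ₀ : ρ₀ * ‖m‖ ^ 2 = -inner ℝ η m := by
    rcases eq_or_ne m 0 with rfl | hm
    · simp
    · exact div_mul_cancel₀ _ (by positivity)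
  have horth : inner ℝ (η + ρ₀ • m) ((ρ - ρ₀) • m) = 0 := by
    rw [inner_add_left, real_inner_smul_right, real_inner_smul_right, real_inner_smul_left,
      real_inner_self_eq_norm_sq]
    linear_combination (ρ - ρ₀) * hρ₀
  rw [show η + ρ • m = (η + ρ₀ • m) + (ρ - ρ₀) • m by rw [sub_smul]; abel,
    norm_add_sq_real, horth, norm_smul, mul_pow, Real.norm_eq_abs, sq_abs]
  ring

lemma exists_Icc_forall_le_norm_add_smul_sq {t : ℝ} (ht : 0 ≤ t) (η m : E) :
    ∃ a, 0 ≤ a ∧ a + t / 4 ≤ t ∧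
      ∀ ρ ∈ Icc a (a + t / 4), (‖η‖ ^ 2 + t ^ 2 * ‖m‖ ^ 2) / 80 ≤ ‖η + ρ • m‖ ^ 2 := by
  obtain ⟨a, ha, hat, hρ⟩ := exists_Icc_forall_sq_add_sq_le_sq_sub ht (-inner ℝ η m / ‖m‖ ^ 2)
  refine ⟨a, ha, hat, fun ρ hρI => ?_⟩
  have hη := norm_add_smul_sq_eq η m 0
  rw [zero_smul, add_zero] at hη
  rw [hη, norm_add_smul_sq_eq η m ρ]
  nlinarith [hρ ρ hρI, sq_nonneg ‖η + (-inner ℝ η m / ‖m‖ ^ 2) • m‖, sq_nonneg ‖m‖]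

lemma norm_add_smul_sq_le {t ρ : ℝ} (hρ : ρ ∈ Icc 0 t) (η m : E) :
    ‖η + ρ • m‖ ^ 2 ≤ 2 * (‖η‖ ^ 2 + t ^ 2 * ‖m‖ ^ 2) := by
  have hle : ‖η + ρ • m‖ ≤ ‖η‖ + t * ‖m‖ :=
    calc ‖η + ρ • m‖ ≤ ‖η‖ + ‖ρ • m‖ := norm_add_le _ _
      _ = ‖η‖ + ρ * ‖m‖ := by rw [norm_smul, Real.norm_of_nonneg hρ.1]
      _ ≤ ‖η‖ + t * ‖m‖ := by gcongr; exact hρ.2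
  nlinarith [norm_nonneg (η + ρ • m), sq_nonneg (‖η‖ - t * ‖m‖)]

variable {s t : ℝ}

lemma continuous_norm_add_smul_rpow (hs : 0 ≤ s) (η m : E) :
    Continuous fun ρ : ℝ => ‖η + ρ • m‖ ^ (2 * s) :=
  (by fun_prop : Continuous fun ρ : ℝ => ‖η + ρ • m‖).rpow_const fun _ => Or.inr (by positivity)

lemma le_integral_norm_add_smul_rpow (hs : 0 ≤ s) (ht : 0 ≤ t) (η m : E) :
    t / 4 * ((‖η‖ ^ 2 + t ^ 2 * ‖m‖ ^ 2) / 80) ^ s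
      ≤ ∫ ρ in (0)..t, ‖η + ρ • m‖ ^ (2 * s) := by
  obtain ⟨a, ha, hat, hlow⟩ := exists_Icc_forall_le_norm_add_smul_sq ht η m
  have hcont := continuous_norm_add_smul_rpow hs η m
  calc t / 4 * ((‖η‖ ^ 2 + t ^ 2 * ‖m‖ ^ 2) / 80) ^ s
      = ∫ _ in a..(a + t / 4), ((‖η‖ ^ 2 + t ^ 2 * ‖m‖ ^ 2) / 80) ^ s := by simp
    _ ≤ ∫ ρ in a..(a + t / 4), ‖η + ρ • m‖ ^ (2 * s) := by
        refine intervalIntegral.integral_mono_on (by linarith) intervalIntegrable_const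
          (hcont.intervalIntegrable _ _) fun ρ hρ => ?_
        rw [Real.rpow_two_mul (norm_nonneg _)]
        exact Real.rpow_le_rpow (by positivity) (hlow ρ hρ) hs
    _ ≤ ∫ ρ in (0)..t, ‖η + ρ • m‖ ^ (2 * s) :=
        intervalIntegral.integral_mono_interval ha (by linarith) hat
          (Filter.Eventually.of_forall fun _ => by positivity) (hcont.intervalIntegrable _ _)

lemma integral_norm_add_smul_rpow_le (hs : 0 ≤ s) (ht : 0 ≤ t) (η m : E) :
    ∫ ρ in (0)..t, ‖η + ρ • m‖ ^ (2 * s) ≤ t * (2 * (‖η‖ ^ 2 + t ^ 2 * ‖m‖ ^ 2)) ^ s := by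
  calc ∫ ρ in (0)..t, ‖η + ρ • m‖ ^ (2 * s)
      ≤ ∫ _ in (0)..t, (2 * (‖η‖ ^ 2 + t ^ 2 * ‖m‖ ^ 2)) ^ s := by
        refine intervalIntegral.integral_mono_on ht
          ((continuous_norm_add_smul_rpow hs η m).intervalIntegrable _ _) intervalIntegrable_const
          fun ρ hρ => ?_
        rw [Real.rpow_two_mul (norm_nonneg _)]
        exact Real.rpow_le_rpow (by positivity) (norm_add_smul_sq_le hρ η m) hs
    _ = t * (2 * (‖η‖ ^ 2 + t ^ 2 * ‖m‖ ^ 2)) ^ s := by simp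

end InnerProductSpace

theorem integral_rpow_two_sided_bound_general (s : ℝ) (hs : 0 < s) :
    ∃ c : ℝ, 0 < c ∧
      ∀ t : ℝ, 0 < t → ∀ m η : EuclideanSpace ℝ (Fin 3),
        (c * (t * (‖η‖ ^ 2 + t ^ 2 * ‖m‖ ^ 2) ^ s)
            ≤ ∫ ρ in (0:ℝ)..t, ‖η + ρ • m‖ ^ (2 * s)) ∧
        (∫ ρ in (0:ℝ)..t, ‖η + ρ • m‖ ^ (2 * s))
            ≤ (1 / c) * (t * (‖η‖ ^ 2 + t ^ 2 * ‖m‖ ^ 2) ^ s) := by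
  refine ⟨1 / (4 * 80 ^ s), by positivity, fun t ht m η => ?_⟩
  set X := ‖η‖ ^ 2 + t ^ 2 * ‖m‖ ^ 2
  have hX : 0 ≤ X := by positivity
  constructor
  · calc 1 / (4 * 80 ^ s) * (t * X ^ s) = t / 4 * (X / 80) ^ s := by
          rw [Real.div_rpow hX (by norm_num)]; ring
      _ ≤ _ := le_integral_norm_add_smul_rpow hs.le ht.le η m
  · have h2 : (2 : ℝ) ^ s ≤ 4 * 80 ^ s :=
      (Real.rpow_le_rpow (by norm_num) (by norm_num) hs.le).trans
        (le_mul_of_one_le_left (by positivity) (by norm_num))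
    calc _ ≤ t * (2 * X) ^ s := integral_norm_add_smul_rpow_le hs.le ht.le η m
      _ = t * 2 ^ s * X ^ s := by rw [Real.mul_rpow (by norm_num) hX]; ring
      _ ≤ t * (4 * 80 ^ s) * X ^ s := by gcongr
      _ = 1 / (1 / (4 * 80 ^ s)) * (t * X ^ s) := by rw [one_div_one_div]; ring

theorem integral_rpow_two_sided_bound (s : ℝ) (hs : 0 < s) (hs1 : s < 1) :
    ∃ c : ℝ, 0 < c ∧
      ∀ t : ℝ, 0 < t → ∀ m η : EuclideanSpace ℝ (Fin 3),
        (c * (t * (‖η‖ ^ 2 + t ^ 2 * ‖m‖ ^ 2) ^ s)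
            ≤ ∫ ρ in (0:ℝ)..t, ‖η + ρ • m‖ ^ (2 * s)) ∧
        (∫ ρ in (0:ℝ)..t, ‖η + ρ • m‖ ^ (2 * s))
            ≤ (1 / c) * (t * (‖η‖ ^ 2 + t ^ 2 * ‖m‖ ^ 2) ^ s) :=
  integral_rpow_two_sided_bound_general s hs
end

section
/- Let 0 < s < 1 and let g₀ ∈ L²(𝕋³ × ℝ³). Define g(t) by (F_{x,v}g)(t,m,η) = exp(−∫₀ᵗ |η+ρm|^{2s} dρ)·(F_{x,v}g₀)(m, η+tm). Then for every t > 0 there exists a constant c_{s,t} > 0 such that ‖exp(c_{s,t}(−Δ_x − Δ_v)^s) g(t)‖_{L²(𝕋³×ℝ³)} ≤ ‖g₀‖_{L²(𝕋³×ℝ³)}; in particular g(t) belongs to the Gevrey class G^{1/(2s)}(𝕋³_x × ℝ³_v) for all t > 0. -/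
/-!
On the Fourier side `g(t)` is the datum sheared by `(m, η) ↦ (m, η + t m)` and damped by
`exp (-∫₀ᵗ |η + ρ m|^{2s} dρ)`. The shear preserves counting × Lebesgue measure, so it suffices
to dominate the Gevrey weight by the damping, i.e. `c (|m|² + |η|²)^s ≤ ∫₀ᵗ |η + ρ m|^{2s} dρ`.
For that, `|η + ρ m|` stays above a fixed multiple of `|m| + |η|` on a subinterval of `[0, t]`
of length `t / 4`: at its start when `|η| ≥ t |m| / 2`, at its end otherwise.
-/

open MeasureTheory

/-- Embed an integer frequency `m ∈ ℤ³` into `ℝ³`. -/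
noncomputable def intoE (m : Fin 3 → ℤ) : EuclideanSpace ℝ (Fin 3) :=
  WithLp.toLp 2 (fun i => (m i : ℝ))

/-- The Fourier-side measure on `ℤ³ × ℝ³` (counting measure times Lebesgue),
used to compute `L²(𝕋³ × ℝ³)` norms via Parseval. -/
noncomputable def freqMeasure :
    Measure ((Fin 3 → ℤ) × EuclideanSpace ℝ (Fin 3)) :=
  (Measure.count : Measure (Fin 3 → ℤ)).prod
    (volume : Measure (EuclideanSpace ℝ (Fin 3)))

open Set

section KeyEstimate

variable {E : Type*} [SeminormedAddCommGroup E] [NormedSpace ℝ E]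

theorem exists_Icc_min_mul_le_norm_add_smul {t : ℝ} (ht : 0 < t) (w η : E) :
    ∃ u ∈ Icc 0 (3 * t / 4), ∀ ρ ∈ Icc u (u + t / 4),
      min 1 (t / 2) / 4 * (‖w‖ + ‖η‖) ≤ ‖η + ρ • w‖ := by
  have hk : min 1 (t / 2) * (‖w‖ + ‖η‖) ≤ ‖η‖ + t / 2 * ‖w‖ := by
    have := min_le_left 1 (t / 2)
    have := min_le_right 1 (t / 2)
    nlinarith [norm_nonneg w, norm_nonneg η]
  have hnorm (ρ : ℝ) (hρ : 0 ≤ ρ) : ‖ρ • w‖ = ρ * ‖w‖ := by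
    rw [norm_smul, Real.norm_of_nonneg hρ]
  rcases le_or_gt (t / 2 * ‖w‖) ‖η‖ with hη | hw
  · refine ⟨0, ⟨le_rfl, by linarith⟩, fun ρ ⟨hρ0, hρ⟩ => ?_⟩
    have := norm_sub_le_norm_add η (ρ • w)
    have : ρ * ‖w‖ ≤ t / 4 * ‖w‖ := mul_le_mul_of_nonneg_right (by linarith) (norm_nonneg w)
    rw [hnorm ρ hρ0] at *
    linarith
  · refine ⟨3 * t / 4, ⟨by linarith, le_rfl⟩, fun ρ ⟨hρ, _⟩ => ?_⟩
    have := norm_sub_le_norm_add (ρ • w) η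
    have : 3 * t / 4 * ‖w‖ ≤ ρ * ‖w‖ := mul_le_mul_of_nonneg_right hρ (norm_nonneg w)
    rw [hnorm ρ (by linarith), add_comm (ρ • w)] at *
    linarith

theorem exists_pos_mul_rpow_le_integral_norm_add_smul_rpow {s t : ℝ} (hs : 0 ≤ s) (ht : 0 < t) :
    ∃ c > 0, ∀ w η : E,
      c * (‖w‖ ^ 2 + ‖η‖ ^ 2) ^ s ≤ ∫ ρ in (0:ℝ)..t, ‖η + ρ • w‖ ^ (2 * s) := by
  set k := min 1 (t / 2) / 4
  have hk : 0 < k := by positivity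
  refine ⟨t / 4 * k ^ (2 * s), by positivity, fun w η => ?_⟩
  obtain ⟨u, ⟨hu0, hut⟩, hbound⟩ := exists_Icc_min_mul_le_norm_add_smul ht w η
  have hcont : Continuous fun ρ : ℝ => ‖η + ρ • w‖ ^ (2 * s) :=
    (continuous_const.add (continuous_id.smul continuous_const)).norm.rpow_const
      fun _ => Or.inr (by positivity)
  have hsum : (‖w‖ ^ 2 + ‖η‖ ^ 2) ^ s ≤ (‖w‖ + ‖η‖) ^ (2 * s) := by
    rw [Real.rpow_mul (by positivity), Real.rpow_two]
    gcongr
    nlinarith [norm_nonneg w, norm_nonneg η]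
  calc t / 4 * k ^ (2 * s) * (‖w‖ ^ 2 + ‖η‖ ^ 2) ^ s
      ≤ t / 4 * (k * (‖w‖ + ‖η‖)) ^ (2 * s) := by
        rw [mul_assoc, Real.mul_rpow hk.le (by positivity)]
        gcongr
    _ = ∫ _ in u..u + t / 4, (k * (‖w‖ + ‖η‖)) ^ (2 * s) := by simp
    _ ≤ ∫ ρ in u..u + t / 4, ‖η + ρ • w‖ ^ (2 * s) :=
        intervalIntegral.integral_mono_on (by linarith) intervalIntegrable_const
          (hcont.intervalIntegrable _ _) fun ρ hρ =>
            Real.rpow_le_rpow (by positivity) (hbound ρ hρ) (by positivity)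
    _ ≤ ∫ ρ in (0:ℝ)..t, ‖η + ρ • w‖ ^ (2 * s) :=
        intervalIntegral.integral_mono_interval hu0 (by linarith) (by linarith)
          (Filter.Eventually.of_forall fun _ => by positivity) (hcont.intervalIntegrable _ _)

end KeyEstimate

section Shear

variable {α E : Type*} [MeasurableSpace α] [Countable α] [MeasurableSingletonClass α]
  [MeasurableSpace E] [AddGroup E] [MeasurableAdd E]

def MeasurableEquiv.shearAddOfCountable (f : α → E) : α × E ≃ᵐ α × E where
  toEquiv := .prodShear (.refl _) fun a => .addRight (f a)
  measurable_toFun := measurable_fst.prodMk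
    (measurable_from_prod_countable_right fun a => measurable_add_const (f a))
  measurable_invFun := measurable_fst.prodMk
    (measurable_from_prod_countable_right fun a => measurable_add_const (-f a))

theorem measurePreserving_shearAddOfCountable (f : α → E) (μ : Measure α) [SFinite μ]
    (ν : Measure E) [SFinite ν] [ν.IsAddRightInvariant] :
    MeasurePreserving (MeasurableEquiv.shearAddOfCountable f) (μ.prod ν) (μ.prod ν) :=
  (MeasurePreserving.id μ).skew_product (g := fun a x => x + f a)
    (measurable_from_prod_countable_right fun a => measurable_add_const (f a))
    (ae_of_all _ fun a => (measurePreserving_add_right ν (f a)).map_eq)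

end Shear

theorem ofReal_exp_two_mul_mul_nnnorm_exp_neg_mul_sq_le {a b : ℝ} (hab : a ≤ b) (z : ℂ) :
    ENNReal.ofReal (Real.exp (2 * a)) * (‖(Real.exp (-b) : ℂ) * z‖₊ : ENNReal) ^ 2
      ≤ (‖z‖₊ : ENNReal) ^ 2 := by
  simp only [← enorm_eq_nnnorm, ← ofReal_norm, ← ENNReal.ofReal_pow (norm_nonneg _),
    ← ENNReal.ofReal_mul (Real.exp_nonneg _)]
  refine ENNReal.ofReal_le_ofReal ?_
  rw [norm_mul, Complex.norm_real, Real.norm_of_nonneg (Real.exp_nonneg _), mul_pow,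
    ← mul_assoc, ← Real.exp_nat_mul, ← Real.exp_add]
  exact mul_le_of_le_one_left (sq_nonneg _) (Real.exp_le_one_iff.2 (by push_cast; linarith))

theorem gevrey_smoothing_toy_model_general (s : ℝ) (hs : 0 < s)
    (G₀ : (Fin 3 → ℤ) → EuclideanSpace ℝ (Fin 3) → ℂ)
    (G : ℝ → (Fin 3 → ℤ) → EuclideanSpace ℝ (Fin 3) → ℂ)
    (hG : ∀ t m η, G t m η =
      Real.exp (-∫ ρ in (0:ℝ)..t, ‖η + ρ • intoE m‖ ^ (2 * s)) *
        G₀ m (η + t • intoE m)) :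
    ∀ t : ℝ, 0 < t → ∃ c : ℝ, 0 < c ∧
      (∫⁻ p, ENNReal.ofReal
            (Real.exp (2 * c * (‖intoE p.1‖ ^ 2 + ‖p.2‖ ^ 2) ^ s))
          * ((‖G t p.1 p.2‖₊ : ENNReal) ^ 2) ∂freqMeasure)
        ≤ ∫⁻ p, ((‖G₀ p.1 p.2‖₊ : ENNReal) ^ 2) ∂freqMeasure := by
  intro t ht
  obtain ⟨c, hc, hkey⟩ :=
    exists_pos_mul_rpow_le_integral_norm_add_smul_rpow (E := EuclideanSpace ℝ (Fin 3)) hs.le ht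
  refine ⟨c, hc, ?_⟩
  let shear := MeasurableEquiv.shearAddOfCountable fun m => t • intoE m
  calc _ ≤ ∫⁻ p, (‖G₀ (shear p).1 (shear p).2‖₊ : ENNReal) ^ 2 ∂freqMeasure :=
        lintegral_mono fun p => by
          rw [hG, mul_assoc 2 c]
          exact ofReal_exp_two_mul_mul_nnnorm_exp_neg_mul_sq_le (hkey _ _) _
    _ = _ := (measurePreserving_shearAddOfCountable _ _ _).lintegral_comp_emb
        shear.measurableEmbedding fun p => (‖G₀ p.1 p.2‖₊ : ENNReal) ^ 2

theorem gevrey_smoothing_toy_model (s : ℝ) (hs : 0 < s) (hs1 : s < 1)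
    (G₀ : (Fin 3 → ℤ) → EuclideanSpace ℝ (Fin 3) → ℂ)
    (G : ℝ → (Fin 3 → ℤ) → EuclideanSpace ℝ (Fin 3) → ℂ)
    (hG : ∀ t m η, G t m η =
      Real.exp (-∫ ρ in (0:ℝ)..t, ‖η + ρ • intoE m‖ ^ (2 * s)) *
        G₀ m (η + t • intoE m)) :
    ∀ t : ℝ, 0 < t → ∃ c : ℝ, 0 < c ∧
      (∫⁻ p, ENNReal.ofReal
            (Real.exp (2 * c * (‖intoE p.1‖ ^ 2 + ‖p.2‖ ^ 2) ^ s))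
          * ((‖G t p.1 p.2‖₊ : ENNReal) ^ 2) ∂freqMeasure)
        ≤ ∫⁻ p, ((‖G₀ p.1 p.2‖₊ : ENNReal) ^ 2) ∂freqMeasure :=
  gevrey_smoothing_toy_model_general s hs G₀ G hG
end
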